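/- Every ≤γ-semigroup S (γ infinite) embeds into a complete ordinal semigroup: adjoin a new element Ω to S, extend the product so that it is defined on every nonempty ordinal-indexed sequence, agrees with the original on sequences from S indexed by nonzero ordinals ≤ γ whose original product was defined via the unique <|γ|⁺-extension, equals Ω on every sequence containing Ω, and equals Ω on every sequence of elements of S indexed by an ordinal ≥ |γ|⁺; the resulting structure on S ∪ {Ω} satisfies (U) and (Ord) for all ordinal-indexed sequences. -/

import Mathlib

universe u

open Ordinal Cardinal

/-- `π : δ → η` is a surjective order-preserving map between the ordinals `δ` and `η`
whose fiber over each `j < η` is the (nonempty) interval `[β j, β j + ε j)`. -/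
def IsFiberDecomp (δ η : Ordinal.{u}) (π β ε : Ordinal.{u} → Ordinal.{u}) : Prop :=
  (∀ i < δ, π i < η) ∧
  (∀ i < δ, ∀ i' < δ, i ≤ i' → π i ≤ π i') ∧
  (∀ j < η, ∃ i < δ, π i = j) ∧
  (∀ j < η, ∀ i : Ordinal.{u}, (i < δ ∧ π i = j) ↔ (β j ≤ i ∧ i < β j + ε j))

/-- A partial ordinal semigroup: a partial product (`none` = undefined) on
ordinal-indexed sequences (a sequence indexed by `δ` is represented by a total function,
and the product only depends on the values at indices `< δ`), satisfying axiom (U)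
(singleton products) and axiom (Ord) (generalized associativity: whenever the product of
`(a i)_{i<δ}` is defined and `π : δ → η` is a surjective order-preserving map with
interval fibers `[β j, β j + ε j)`, all the fiber products and the `η`-indexed product of
the fiber products are defined, and the latter equals the product over `δ`). -/
structure PartialOrdinalSemigroup (S : Type u) : Type (u + 1) where
  prod : Ordinal.{u} → (Ordinal.{u} → S) → Option S
  congr : ∀ δ a b, (∀ i < δ, a i = b i) → prod δ a = prod δ b
  unary : ∀ a, prod 1 a = some (a 0)
  ord : ∀ δ η (a : Ordinal.{u} → S) (π β ε : Ordinal.{u} → Ordinal.{u}) (s : S),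
    IsFiberDecomp δ η π β ε → prod δ a = some s →
    ∃ b : Ordinal.{u} → S,
      (∀ j < η, prod (ε j) (fun γ => a (β j + γ)) = some (b j)) ∧
      prod η b = some s

/-- The product of `P` is defined exactly on sequences whose index ordinal satisfies `D`. -/
def DomExactly {S : Type u} (P : PartialOrdinalSemigroup S)
    (D : Ordinal.{u} → Prop) : Prop :=
  ∀ δ a, (P.prod δ a).isSome ↔ D δ

/-- `Q` extends `P`: every product defined in `P` is defined in `Q` with the same value. -/
def Extends {S : Type u} (Q P : PartialOrdinalSemigroup S) : Prop :=
  ∀ δ a s, P.prod δ a = some s → Q.prod δ a = some s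

/-!
Adjoin `Ω` and let a nonempty product be `Ω` unless all factors lie in `S` and the length `δ`
satisfies `|δ| ≤ |γ|`, in which case it is computed in the `<|γ|⁺`-extension. Axiom (Ord)
survives: a product avoiding `Ω` is an instance of (Ord) in the extension, while a product equal
to `Ω` has a fiber containing `Ω`, a fiber of length `≥ |γ|⁺`, or at least `|γ|⁺` fibers, because
at most `|γ|` fibers of cardinality at most `|γ|` cover at most `|γ| · |γ| = |γ|` indices.
Agreement with every `<|γ|⁺`-extension is uniqueness of that extension: an infinite `δ` which is
not an initial ordinal splits into fewer than `δ` fibers, each shorter than `δ` (two pieces at a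
successor, a fundamental sequence at a limit), so products of length `> γ` are forced by those of
length `≤ γ`.
-/

namespace IsFiberDecomp

variable {δ η : Ordinal.{u}} {π β ε : Ordinal.{u} → Ordinal.{u}}

theorem mem_fiber_iff (hD : IsFiberDecomp δ η π β ε) {j : Ordinal} (hj : j < η) (i : Ordinal) :
    i < δ ∧ π i = j ↔ β j ≤ i ∧ i < β j + ε j :=
  hD.2.2.2 j hj i

theorem length_pos (hD : IsFiberDecomp δ η π β ε) {j : Ordinal} (hj : j < η) : 0 < ε j := by
  obtain ⟨i, hi, rfl⟩ := hD.2.2.1 j hj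
  obtain ⟨hle, hlt⟩ := (hD.mem_fiber_iff hj i).1 ⟨hi, rfl⟩
  exact (lt_add_iff_pos_right _).1 (hle.trans_lt hlt)

theorem start_add_length_le (hD : IsFiberDecomp δ η π β ε) {j : Ordinal} (hj : j < η) :
    β j + ε j ≤ δ := by
  by_contra! h
  have hstart :=
    (hD.mem_fiber_iff hj (β j)).2 ⟨le_rfl, (lt_add_iff_pos_right _).2 (hD.length_pos hj)⟩
  exact (((hD.mem_fiber_iff hj δ).2 ⟨hstart.1.le, h⟩).1).false

theorem length_le (hD : IsFiberDecomp δ η π β ε) {j : Ordinal} (hj : j < η) : ε j ≤ δ :=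
  le_add_self.trans (hD.start_add_length_le hj)

theorem start_add_lt (hD : IsFiberDecomp δ η π β ε) {j t : Ordinal} (hj : j < η) (ht : t < ε j) :
    β j + t < δ :=
  (add_lt_add_right ht _).trans_le (hD.start_add_length_le hj)

theorem start_add_sub (hD : IsFiberDecomp δ η π β ε) {i : Ordinal} (hi : i < δ) :
    π i < η ∧ i - β (π i) < ε (π i) ∧ β (π i) + (i - β (π i)) = i := by
  have hπ : π i < η := hD.1 i hi
  obtain ⟨hle, hlt⟩ := (hD.mem_fiber_iff hπ i).1 ⟨hi, rfl⟩
  exact ⟨hπ, (Ordinal.sub_lt_of_le hle).2 hlt, Ordinal.add_sub_cancel_of_le hle⟩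

theorem pos (hD : IsFiberDecomp δ η π β ε) (hδ : 0 < δ) : 0 < η :=
  (hD.1 0 hδ).pos

theorem card_le_card (hD : IsFiberDecomp δ η π β ε) : η.card ≤ δ.card := by
  have hsurj : Function.Surjective fun i : Set.Iio δ => (⟨π i, hD.1 i i.2⟩ : Set.Iio η) := by
    rintro ⟨j, hj⟩
    obtain ⟨i, hi, rfl⟩ := hD.2.2.1 j hj
    exact ⟨⟨i, hi⟩, rfl⟩
  have h := Cardinal.mk_le_of_surjective hsurj
  rwa [Cardinal.mk_Iio_ordinal, Cardinal.mk_Iio_ordinal, Cardinal.lift_le] at h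

theorem card_le (hD : IsFiberDecomp δ η π β ε) {c : Cardinal.{u}}
    (hε : ∀ j < η, (ε j).card ≤ c) : δ.card ≤ η.card * c := by
  have hsurj : Function.Surjective fun p : Σ j : Set.Iio η, Set.Iio (ε j) =>
      (⟨β p.1 + p.2, hD.start_add_lt p.1.2 p.2.2⟩ : Set.Iio δ) := by
    rintro ⟨i, hi⟩
    obtain ⟨hπ, hsub, hadd⟩ := hD.start_add_sub hi
    exact ⟨⟨⟨π i, hπ⟩, ⟨i - β (π i), hsub⟩⟩, Subtype.ext hadd⟩
  have h := Cardinal.mk_le_of_surjective hsurj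
  rw [Cardinal.mk_Iio_ordinal, Cardinal.mk_sigma] at h
  refine Cardinal.lift_le.1 (h.trans ?_)
  calc (Cardinal.sum fun j : Set.Iio η => #(Set.Iio (ε j)))
      ≤ Cardinal.sum fun _ : Set.Iio η => Cardinal.lift.{u + 1} c :=
        Cardinal.sum_le_sum _ _ fun j => by
          rw [Cardinal.mk_Iio_ordinal]; exact Cardinal.lift_le.2 (hε j j.2)
    _ = Cardinal.lift.{u + 1} (η.card * c) := by
        rw [Cardinal.sum_const', Cardinal.mk_Iio_ordinal, Cardinal.lift_mul]

end IsFiberDecomp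

theorem isFiberDecomp_add {ξ ζ : Ordinal.{u}} (hξ : 0 < ξ) (hζ : 0 < ζ) :
    IsFiberDecomp (ξ + ζ) 2 (fun i => if i < ξ then 0 else 1)
      (fun j => if j = 0 then 0 else ξ) (fun j => if j = 0 then ξ else ζ) := by
  have htwo : ∀ j : Ordinal.{u}, j < 2 ↔ j = 0 ∨ j = 1 := fun j => by
    rw [← one_add_one_eq_two, Order.lt_add_one_iff, Order.le_one_iff]
  refine ⟨fun i _ => ?_, fun i _ i' _ hii' => ?_, fun j hj => ?_, fun j hj i => ?_⟩
  · dsimp only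
    split_ifs <;> simp [htwo]
  · dsimp only
    split_ifs with h h' h'
    exacts [le_rfl, zero_le_one, absurd (hii'.trans_lt h') h, le_rfl]
  · rcases (htwo j).1 hj with rfl | rfl
    · exact ⟨0, hξ.trans_le le_self_add, by simp [hξ]⟩
    · exact ⟨ξ, lt_add_of_pos_right ξ hζ, by simp⟩
  · rcases (htwo j).1 hj with rfl | rfl
    · constructor
      · rintro ⟨-, h⟩
        simpa [ite_eq_left_iff] using h
      · rintro ⟨-, h⟩
        simp only [if_pos, zero_add] at h
        exact ⟨h.trans_le le_self_add, by simp [h]⟩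
    · simp [and_comm]

theorem isFiberDecomp_of_cofinal {δ η : Ordinal.{u}} {F : Ordinal.{u} → Ordinal.{u}}
    (hmono : StrictMonoOn F (Set.Iio η)) (hlt : ∀ j < η, F j < δ)
    (hcof : ∀ i < δ, ∃ j < η, i ≤ F j) :
    IsFiberDecomp δ η (fun i => sInf {j | j < η ∧ i ≤ F j})
      (fun j => ⨆ j' : Set.Iio j, F j' + 1) (fun j => (F j + 1) - ⨆ j' : Set.Iio j, F j' + 1) := by
  set π := fun i => sInf {j | j < η ∧ i ≤ F j}
  set β := fun j : Ordinal.{u} => ⨆ j' : Set.Iio j, F j' + 1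
  have hβ : ∀ j i, β j ≤ i ↔ ∀ j' < j, F j' < i := fun j i => by
    simp [β, Ordinal.iSup_le_iff, Order.add_one_le_iff]
  have hmem : ∀ i < δ, π i < η ∧ i ≤ F (π i) := fun i hi => csInf_mem (hcof i hi)
  have hfiber : ∀ j < η, ∀ i, i < δ ∧ π i = j ↔ (∀ j' < j, F j' < i) ∧ i ≤ F j := by
    intro j hj i
    constructor
    · rintro ⟨hi, rfl⟩
      refine ⟨fun j' hj' => not_le.1 fun h => ?_, (hmem i hi).2⟩
      exact (csInf_le' (s := {j | j < η ∧ i ≤ F j}) ⟨hj'.trans (hmem i hi).1, h⟩).not_gt hj'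
    · rintro ⟨hbelow, hle⟩
      have hi : i < δ := hle.trans_lt (hlt j hj)
      exact ⟨hi, (csInf_le' (s := {j | j < η ∧ i ≤ F j}) ⟨hj, hle⟩).antisymm
        (not_lt.1 fun h => ((hbelow _ h).trans_le (hmem i hi).2).false)⟩
  have hstart : ∀ j < η, ∀ j' < j, F j' < F j := fun j hj j' hj' => hmono (hj'.trans hj) hj hj'
  refine ⟨fun i hi => (hmem i hi).1, fun i _ i' hi' hii' => ?_, fun j hj => ?_, fun j hj i => ?_⟩
  · exact csInf_le_csInf (OrderBot.bddBelow _) (hcof i' hi') fun j hj => ⟨hj.1, hii'.trans hj.2⟩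
  · exact ⟨F j, hlt j hj, ((hfiber j hj (F j)).2 ⟨hstart j hj, le_rfl⟩).2⟩
  · rw [Ordinal.add_sub_cancel_of_le (((hβ j (F j)).2 (hstart j hj)).trans le_self_add),
      Order.lt_add_one_iff, hβ]
    exact hfiber j hj i

theorem exists_isFiberDecomp_lt {δ : Ordinal.{u}} (hδ : δ.card.ord < δ) :
    ∃ η π β ε, IsFiberDecomp δ η π β ε ∧ η < δ ∧ ∀ j < η, ε j < δ := by
  have hω : ω ≤ δ := not_lt.1 fun h => by
    obtain ⟨n, rfl⟩ := Ordinal.lt_omega0.1 h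
    simp at hδ
  rcases Ordinal.zero_or_succ_or_isSuccLimit δ with rfl | ⟨δ₀, rfl⟩ | hlim
  · simp at hδ
  · have htwo : 2 < Order.succ δ₀ := (Ordinal.natCast_lt_omega0 2).trans_le hω
    rw [Order.succ_eq_add_one] at htwo ⊢
    have hδ₀ : 0 < δ₀ := by
      by_contra! h
      simp [nonpos_iff_eq_zero.1 h] at htwo
    refine ⟨2, _, _, _, isFiberDecomp_add hδ₀ zero_lt_one, htwo, fun j _ => ?_⟩
    split_ifs
    exacts [lt_add_one δ₀, one_lt_two.trans htwo]
  · obtain ⟨f, hf⟩ := Ordinal.exists_isFundamentalSeq (o := δ) rfl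
    set F : Ordinal.{u} → Ordinal.{u} := fun j => if h : j < δ.cof.ord then (f ⟨j, h⟩).1 else 0
    have hF : ∀ j (hj : j < δ.cof.ord), F j = f ⟨j, hj⟩ := fun j hj => dif_pos hj
    have hmono : StrictMonoOn F (Set.Iio δ.cof.ord) := fun j hj j' hj' hjj' => by
      rw [hF j hj, hF j' hj']
      exact hf.strictMono (Subtype.mk_lt_mk.2 hjj')
    have hlt : ∀ j < δ.cof.ord, F j < δ := fun j hj => (hF j hj).symm ▸ (f ⟨j, hj⟩).2
    have hcof : ∀ i < δ, ∃ j < δ.cof.ord, i ≤ F j := fun i hi => by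
      obtain ⟨_, ⟨j, rfl⟩, hle⟩ := hf.isCofinal_range ⟨i, hi⟩
      exact ⟨j, j.2, (hF j j.2).symm ▸ hle⟩
    refine ⟨_, _, _, _, isFiberDecomp_of_cofinal hmono hlt hcof,
      (Cardinal.ord_le_ord.2 (Ordinal.cof_le_card δ)).trans_lt hδ, fun j hj => ?_⟩
    exact (Ordinal.sub_le_self _ _).trans_lt (hlim.add_one_lt (hlt j hj))

namespace PartialOrdinalSemigroup

variable {S : Type u}

theorem prod_eq_prod_of_card_le {P₁ P₂ : PartialOrdinalSemigroup S} {γ : Ordinal.{u}}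
    (h₁ : ∀ δ a, 0 < δ → δ.card ≤ γ.card → (P₁.prod δ a).isSome)
    (h₂ : ∀ δ a, 0 < δ → δ.card ≤ γ.card → (P₂.prod δ a).isSome)
    (heq : ∀ δ a, 0 < δ → δ ≤ γ → P₁.prod δ a = P₂.prod δ a)
    {δ : Ordinal.{u}} (hδ : 0 < δ) (hδγ : δ.card ≤ γ.card) (a : Ordinal.{u} → S) :
    P₁.prod δ a = P₂.prod δ a := by
  induction δ using WellFoundedLT.induction generalizing a with
  | _ δ IH =>
  rcases le_or_gt δ γ with hle | hlt
  · exact heq δ a hδ hle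
  obtain ⟨η, π, β, ε, hD, hηδ, hεδ⟩ := exists_isFiberDecomp_lt
    ((Cardinal.ord_le_ord.2 hδγ).trans_lt ((Cardinal.ord_card_le γ).trans_lt hlt))
  obtain ⟨s₁, hs₁⟩ := Option.isSome_iff_exists.1 (h₁ δ a hδ hδγ)
  obtain ⟨s₂, hs₂⟩ := Option.isSome_iff_exists.1 (h₂ δ a hδ hδγ)
  obtain ⟨b₁, hb₁, ht₁⟩ := P₁.ord δ η a π β ε s₁ hD hs₁
  obtain ⟨b₂, hb₂, ht₂⟩ := P₂.ord δ η a π β ε s₂ hD hs₂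
  have hshorter : ∀ {ξ}, ξ < δ → ξ.card ≤ γ.card := fun h => (Ordinal.card_le_card h.le).trans hδγ
  have hb : ∀ j < η, b₁ j = b₂ j := fun j hj => Option.some.inj <| by
    rw [← hb₁ j hj, ← hb₂ j hj]
    exact IH _ (hεδ j hj) (hD.length_pos hj) (hshorter (hεδ j hj)) _
  rw [hs₁, hs₂, ← ht₁, ← ht₂, IH η hηδ (hD.pos hδ) (hshorter hηδ), P₂.congr η b₁ b₂ hb]

theorem eq_of_extends {P P₁ P₂ : PartialOrdinalSemigroup S} {γ : Ordinal.{u}}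
    (hP : DomExactly P (fun δ => 0 < δ ∧ δ ≤ γ))
    (h₁ : DomExactly P₁ (fun δ => 0 < δ ∧ δ.card ≤ γ.card))
    (h₂ : DomExactly P₂ (fun δ => 0 < δ ∧ δ.card ≤ γ.card))
    (he₁ : Extends P₁ P) (he₂ : Extends P₂ P) : P₁ = P₂ := by
  have heq : ∀ δ a, 0 < δ → δ ≤ γ → P₁.prod δ a = P₂.prod δ a := fun δ a hδ hδγ => by
    obtain ⟨s, hs⟩ := Option.isSome_iff_exists.1 ((hP δ a).2 ⟨hδ, hδγ⟩)
    rw [he₁ δ a s hs, he₂ δ a s hs]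
  have hprod : P₁.prod = P₂.prod := by
    funext δ a
    by_cases hδ : 0 < δ ∧ δ.card ≤ γ.card
    · exact prod_eq_prod_of_card_le (fun δ a hδ hδγ => (h₁ δ a).2 ⟨hδ, hδγ⟩)
        (fun δ a hδ hδγ => (h₂ δ a).2 ⟨hδ, hδγ⟩) heq hδ.1 hδ.2 a
    · rw [Option.not_isSome_iff_eq_none.1 (mt (h₁ δ a).1 hδ),
        Option.not_isSome_iff_eq_none.1 (mt (h₂ δ a).1 hδ)]
  cases P₁
  cases P₂
  congr

end PartialOrdinalSemigroup

theorem exists_lift_of_ne_none {α : Type*} {δ : Ordinal.{u}} {a : Ordinal.{u} → Option α}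
    (hδ : 0 < δ) (h : ∀ i < δ, a i ≠ none) :
    ∃ a' : Ordinal.{u} → α, ∀ i < δ, a i = some (a' i) := by
  obtain ⟨x, -⟩ := Option.ne_none_iff_exists'.1 (h 0 hδ)
  refine ⟨fun i => (a i).getD x, fun i hi => ?_⟩
  obtain ⟨y, hy⟩ := Option.ne_none_iff_exists'.1 (h i hi)
  simp [hy]

section AdjoinAbsorbing

variable {S : Type u} {c : Cardinal.{u}} {P : PartialOrdinalSemigroup S}
  {δ : Ordinal.{u}} {a : Ordinal.{u} → Option S}

/-- `none : Option S` is the absorbing element `Ω`; the outer `none` means "undefined". -/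
noncomputable def adjoinAbsorbingProd (c : Cardinal.{u}) (P : PartialOrdinalSemigroup S)
    (δ : Ordinal.{u}) (a : Ordinal.{u} → Option S) : Option (Option S) :=
  open Classical in
  if δ = 0 then none
  else if h : δ.card ≤ c ∧ ∃ a' : Ordinal.{u} → S, ∀ i < δ, a i = some (a' i) then
    (P.prod δ h.2.choose).map some
  else some none

theorem adjoinAbsorbingProd_zero : adjoinAbsorbingProd c P 0 a = none := by
  simp [adjoinAbsorbingProd]

theorem adjoinAbsorbingProd_of_lift {a' : Ordinal.{u} → S} (hδ : δ ≠ 0) (hc : δ.card ≤ c)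
    (ha : ∀ i < δ, a i = some (a' i)) : adjoinAbsorbingProd c P δ a = (P.prod δ a').map some := by
  have h : δ.card ≤ c ∧ ∃ a' : Ordinal.{u} → S, ∀ i < δ, a i = some (a' i) := ⟨hc, a', ha⟩
  rw [adjoinAbsorbingProd, if_neg hδ, dif_pos h,
    P.congr δ _ a' fun i hi => Option.some.inj ((h.2.choose_spec i hi).symm.trans (ha i hi))]

theorem adjoinAbsorbingProd_of_not_lift (hδ : δ ≠ 0)
    (h : ¬(δ.card ≤ c ∧ ∃ a' : Ordinal.{u} → S, ∀ i < δ, a i = some (a' i))) :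
    adjoinAbsorbingProd c P δ a = some none := by
  rw [adjoinAbsorbingProd, if_neg hδ, dif_neg h]

theorem adjoinAbsorbingProd_of_exists_none (hδ : 0 < δ) (h : ∃ i < δ, a i = none) :
    adjoinAbsorbingProd c P δ a = some none := by
  refine adjoinAbsorbingProd_of_not_lift hδ.ne' fun ⟨_, a', ha⟩ => ?_
  obtain ⟨i, hi, hnone⟩ := h
  simp [ha i hi] at hnone

theorem adjoinAbsorbingProd_of_lt_card (h : c < δ.card) :
    adjoinAbsorbingProd c P δ a = some none :=
  adjoinAbsorbingProd_of_not_lift (by rintro rfl; simp at h) fun ⟨hc, _⟩ => hc.not_gt h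

theorem card_le_and_ne_none_of_adjoinAbsorbingProd_eq {x : S}
    (h : adjoinAbsorbingProd c P δ a = some (some x)) : δ.card ≤ c ∧ ∀ i < δ, a i ≠ none := by
  unfold adjoinAbsorbingProd at h
  split_ifs at h with h0 hlift
  · exact ⟨hlift.1, fun i hi => by simp [hlift.2.choose_spec i hi]⟩
  · simp at h

theorem adjoinAbsorbingProd_isSome (hP : ∀ δ a, 0 < δ → δ.card ≤ c → (P.prod δ a).isSome) :
    (adjoinAbsorbingProd c P δ a).isSome ↔ 0 < δ := by
  unfold adjoinAbsorbingProd
  split_ifs with h0 hlift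
  · simp [h0]
  · simp [pos_iff_ne_zero.2 h0, hP δ _ (pos_iff_ne_zero.2 h0) hlift.1]
  · simp [pos_iff_ne_zero.2 h0]

theorem adjoinAbsorbingProd_congr (δ : Ordinal.{u}) (a b : Ordinal.{u} → Option S)
    (h : ∀ i < δ, a i = b i) : adjoinAbsorbingProd c P δ a = adjoinAbsorbingProd c P δ b := by
  rcases eq_or_ne δ 0 with rfl | h0
  · rw [adjoinAbsorbingProd_zero, adjoinAbsorbingProd_zero]
  by_cases hlift : δ.card ≤ c ∧ ∃ a' : Ordinal.{u} → S, ∀ i < δ, a i = some (a' i)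
  · obtain ⟨hc, a', ha⟩ := hlift
    rw [adjoinAbsorbingProd_of_lift h0 hc ha,
      adjoinAbsorbingProd_of_lift h0 hc fun i hi => (h i hi).symm.trans (ha i hi)]
  · rw [adjoinAbsorbingProd_of_not_lift h0 hlift, adjoinAbsorbingProd_of_not_lift h0]
    rintro ⟨hc, a', ha⟩
    exact hlift ⟨hc, a', fun i hi => (h i hi).trans (ha i hi)⟩

theorem adjoinAbsorbingProd_one (hc : 1 ≤ c) (a : Ordinal.{u} → Option S) :
    adjoinAbsorbingProd c P 1 a = some (a 0) := by
  cases ha : a 0 with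
  | none => exact adjoinAbsorbingProd_of_exists_none zero_lt_one ⟨0, zero_lt_one, ha⟩
  | some x =>
    rw [adjoinAbsorbingProd_of_lift (a' := fun _ => x) one_ne_zero (by simpa using hc)
      fun i hi => by rw [Order.lt_one_iff.1 hi, ha], P.unary]
    rfl

theorem adjoinAbsorbingProd_ord (hcc : c * c ≤ c)
    (hP : ∀ δ a, 0 < δ → δ.card ≤ c → (P.prod δ a).isSome) {η : Ordinal.{u}}
    {π β ε : Ordinal.{u} → Ordinal.{u}} {s : Option S} (hD : IsFiberDecomp δ η π β ε)
    (hs : adjoinAbsorbingProd c P δ a = some s) :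
    ∃ b : Ordinal.{u} → Option S,
      (∀ j < η, adjoinAbsorbingProd c P (ε j) (fun t => a (β j + t)) = some (b j)) ∧
      adjoinAbsorbingProd c P η b = some s := by
  have hδ : 0 < δ := pos_iff_ne_zero.2 fun h => by simp [h, adjoinAbsorbingProd_zero] at hs
  have hη := hD.pos hδ
  choose! b hb using fun j (hj : j < η) => Option.isSome_iff_exists.1
    ((adjoinAbsorbingProd_isSome hP (a := fun t => a (β j + t))).2 (hD.length_pos hj))
  refine ⟨b, hb, ?_⟩
  by_cases hlift : δ.card ≤ c ∧ ∃ a' : Ordinal.{u} → S, ∀ i < δ, a i = some (a' i)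
  · obtain ⟨hc, a', ha⟩ := hlift
    rw [adjoinAbsorbingProd_of_lift hδ.ne' hc ha] at hs
    obtain ⟨x, hx, rfl⟩ := Option.map_eq_some_iff.1 hs
    obtain ⟨b', hb', hx'⟩ := P.ord δ η a' π β ε x hD hx
    have hbb' : ∀ j < η, b j = some (b' j) := fun j hj => by
      have hfib := hb j hj
      rw [adjoinAbsorbingProd_of_lift (hD.length_pos hj).ne'
        ((Ordinal.card_le_card (hD.length_le hj)).trans hc)
        (fun t ht => ha _ (hD.start_add_lt hj ht)), hb' j hj] at hfib
      exact (Option.some.inj hfib).symm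
    rw [adjoinAbsorbingProd_of_lift hη.ne' (hD.card_le_card.trans hc) hbb', hx']
    rfl
  · rw [adjoinAbsorbingProd_of_not_lift hδ.ne' hlift] at hs
    cases hs
    refine adjoinAbsorbingProd_of_not_lift hη.ne' fun ⟨hηc, b', hb'⟩ => hlift ?_
    have hfib : ∀ j < η, (ε j).card ≤ c ∧ ∀ t < ε j, a (β j + t) ≠ none := fun j hj =>
      card_le_and_ne_none_of_adjoinAbsorbingProd_eq ((hb j hj).trans (congrArg some (hb' j hj)))
    refine ⟨(hD.card_le fun j hj => (hfib j hj).1).trans ((mul_le_mul' hηc le_rfl).trans hcc),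
      exists_lift_of_ne_none hδ fun i hi => ?_⟩
    obtain ⟨hπ, hsub, hadd⟩ := hD.start_add_sub hi
    rw [← hadd]
    exact (hfib _ hπ).2 _ hsub

noncomputable def adjoinAbsorbing (c : Cardinal.{u}) (P : PartialOrdinalSemigroup S)
    (hc : 1 ≤ c) (hcc : c * c ≤ c) (hP : ∀ δ a, 0 < δ → δ.card ≤ c → (P.prod δ a).isSome) :
    PartialOrdinalSemigroup (Option S) where
  prod := adjoinAbsorbingProd c P
  congr := adjoinAbsorbingProd_congr
  unary := adjoinAbsorbingProd_one hc
  ord _ _ _ _ _ _ _ hD hs := adjoinAbsorbingProd_ord hcc hP hD hs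

end AdjoinAbsorbing

/-- Every `≤γ`-semigroup (`γ` infinite) embeds into a complete ordinal semigroup obtained
by adjoining a fully absorbing element `Ω` (here `Ω = (none : Option S)`): there is a
partial ordinal semigroup structure `Q` on `Option S` whose products are defined on
exactly the nonempty ordinal-indexed sequences, which agrees (via `some`) with the unique
`<|γ|⁺`-extension of the original product, takes the value `Ω` on every sequence
containing `Ω`, and takes the value `Ω` on every sequence of elements of `S` indexed by
an ordinal `≥ |γ|⁺`. -/
theorem embeds_in_complete_ordinal_semigroup {S : Type u} (γ : Ordinal.{u})
    (hγ : Ordinal.omega0 ≤ γ) (P : PartialOrdinalSemigroup S)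
    (hP : DomExactly P (fun δ => 0 < δ ∧ δ ≤ γ)) :
    ∃ Q : PartialOrdinalSemigroup (Option S),
      DomExactly Q (fun δ => 0 < δ) ∧
      (∀ P' : PartialOrdinalSemigroup S,
        DomExactly P' (fun δ => 0 < δ ∧ δ.card ≤ γ.card) → Extends P' P →
        ∀ δ (a : Ordinal.{u} → S) (s : S), P'.prod δ a = some s →
          Q.prod δ (fun i => some (a i)) = some (some s)) ∧
      (∀ δ (a : Ordinal.{u} → Option S), 0 < δ → (∃ i < δ, a i = none) →
        Q.prod δ a = some none) ∧
      (∀ δ (a : Ordinal.{u} → Option S), (Order.succ γ.card).ord ≤ δ →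
        (∀ i < δ, (a i).isSome) → Q.prod δ a = some none) := by
  have hγc : ℵ₀ ≤ γ.card := Ordinal.aleph0_le_card.2 hγ
  have hbig : ∀ {δ : Ordinal.{u}}, (Order.succ γ.card).ord ≤ δ → γ.card < δ.card :=
    fun hδ => (Order.lt_succ _).trans_le (Cardinal.ord_le.1 hδ)
  by_cases hext : ∃ P₀ : PartialOrdinalSemigroup S,
      DomExactly P₀ (fun δ => 0 < δ ∧ δ.card ≤ γ.card) ∧ Extends P₀ P
  · obtain ⟨P₀, hP₀, hext₀⟩ := hext
    have hdef : ∀ δ a, 0 < δ → δ.card ≤ γ.card → (P₀.prod δ a).isSome :=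
      fun δ a hδ hδγ => (hP₀ δ a).2 ⟨hδ, hδγ⟩
    refine ⟨adjoinAbsorbing γ.card P₀ (one_le_aleph0.trans hγc) (mul_eq_self hγc).le hdef,
      fun _ _ => adjoinAbsorbingProd_isSome hdef, fun P' hP' hext' δ a s hs => ?_,
      fun _ _ => adjoinAbsorbingProd_of_exists_none,
      fun _ _ hδ _ => adjoinAbsorbingProd_of_lt_card (hbig hδ)⟩
    obtain rfl := PartialOrdinalSemigroup.eq_of_extends hP hP' hP₀ hext' hext₀
    obtain ⟨hδ, hδγ⟩ := (hP' δ a).1 (by simp [hs])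
    show adjoinAbsorbingProd γ.card P' δ _ = _
    rw [adjoinAbsorbingProd_of_lift hδ.ne' hδγ fun _ _ => rfl, hs]
    rfl
  -- Without a `<|γ|⁺`-extension the agreement clause is vacuous, and `c = 1` (only singleton
  -- products stay in `S`) will do.
  · have hdef : ∀ δ a, 0 < δ → δ.card ≤ 1 → (P.prod δ a).isSome := fun δ a hδ hδ1 => by
      have hδ1 : δ ≤ 1 := by simpa using (Ordinal.card_le_nat (n := 1)).1 (by simpa using hδ1)
      exact (hP δ a).2 ⟨hδ, hδ1.trans (Order.one_le_iff_pos.2 (omega0_pos.trans_le hγ))⟩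
    exact ⟨adjoinAbsorbing 1 P le_rfl (mul_one 1).le hdef,
      fun _ _ => adjoinAbsorbingProd_isSome hdef,
      fun P' hP' hext' => (hext ⟨P', hP', hext'⟩).elim,
      fun _ _ => adjoinAbsorbingProd_of_exists_none,
      fun _ _ hδ _ => adjoinAbsorbingProd_of_lt_card ((one_le_aleph0.trans hγc).trans_lt (hbig hδ))⟩
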